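/- arXiv:1604.03885 — 2 statements merged into one kernel-verified Lean document; each statement's English description precedes it below -/
import Mathlib

section
/- Let c > 1, γ = 1/c, T > 0, v ∈ ℝ, r ∈ ℝ, m a positive integer. With f(m, l) = r(ml)^c + v(T - (ml)^c)^γ, one has the identity (c - 2)·∂²f/∂l² - l·∂³f/∂l³ = v(c-1)(2c-1) T m^{2c} l^{2c-2} (T - (ml)^c)^{γ-3} for all l > 0 with (ml)^c < T. -/
/-!
Write `W = T - A x^c` with `A = m^c`. The derivatives of `r A x^c + v W^γ` stay in the span of
the profiles `x^p W^q`, whose derivative is `p x^(p-1) W^q - c q A x^(p+c-1) W^(q-1)`; since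
`c γ = 1`, three differentiations give explicit combinations. In `(c - 2) f'' - x f'''` the `x^c`
part and the `W^(γ-1)` terms cancel, and the remaining `W^(γ-2)` and `W^(γ-3)` terms combine
through `W + A x^c = T`.
-/

open Set Filter Topology

theorem Set.EqOn.iteratedDeriv_succ_of_hasDerivAt {𝕜 F : Type*} [NontriviallyNormedField 𝕜]
    [NormedAddCommGroup F] [NormedSpace 𝕜 F] {f g g' : 𝕜 → F} {s : Set 𝕜} {n : ℕ}
    (hf : EqOn (iteratedDeriv n f) g s) (hs : IsOpen s) (hg : ∀ x ∈ s, HasDerivAt g (g' x) x) :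
    EqOn (iteratedDeriv (n + 1) f) g' s := fun x hx => by
  rw [iteratedDeriv_succ, (hf.eventuallyEq_of_mem (hs.mem_nhds hx)).deriv_eq]
  exact (hg x hx).deriv

noncomputable def powMulSubRpow (A T c p q x : ℝ) : ℝ := x ^ p * (T - A * x ^ c) ^ q

section
variable {A T c : ℝ}
local notation "φ" => powMulSubRpow A T c

theorem hasDerivAt_powMulSubRpow (p q : ℝ) {x : ℝ} (hx : 0 < x) (hxT : A * x ^ c < T) :
    HasDerivAt (φ p q) (p * φ (p - 1) q x - c * q * A * φ (p + c - 1) (q - 1) x) x := by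
  have hpow (p : ℝ) : HasDerivAt (fun y : ℝ => y ^ p) (p * x ^ (p - 1)) x :=
    Real.hasDerivAt_rpow_const (Or.inl hx.ne')
  have hW := (((hpow c).const_mul A).const_sub T).rpow_const (p := q) (Or.inl (sub_pos.2 hxT).ne')
  refine ((hpow p).mul hW).congr_deriv ?_
  rw [powMulSubRpow, powMulSubRpow, add_sub_assoc, Real.rpow_add hx]
  ring

theorem mul_powMulSubRpow (p q : ℝ) {x : ℝ} (hx : 0 < x) : x * φ p q x = φ (p + 1) q x := by
  rw [powMulSubRpow, powMulSubRpow, Real.rpow_add_one hx.ne']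
  ring

theorem rpow_mul_powMulSubRpow (p q : ℝ) {x : ℝ} (hx : 0 < x) :
    x ^ c * φ p q x = φ (p + c) q x := by
  rw [powMulSubRpow, powMulSubRpow, Real.rpow_add hx]
  ring

theorem sub_mul_powMulSubRpow (p q : ℝ) {x : ℝ} (hxT : A * x ^ c < T) :
    (T - A * x ^ c) * φ p q x = φ p (q + 1) x := by
  rw [powMulSubRpow, powMulSubRpow, Real.rpow_add_one (sub_pos.2 hxT).ne']
  ring

theorem isOpen_setOf_pos_and_mul_rpow_lt : IsOpen {y : ℝ | 0 < y ∧ A * y ^ c < T} :=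
  (continuousOn_const.mul (continuousOn_id.rpow_const fun _ hy => Or.inl (ne_of_gt hy))
    ).isOpen_inter_preimage isOpen_Ioi isOpen_Iio

variable {γ r v : ℝ}

theorem eqOn_iteratedDeriv_two (hcγ : c * γ = 1) :
    EqOn (iteratedDeriv 2 fun y => r * (A * y ^ c) + v * (T - A * y ^ c) ^ γ)
      (fun y => r * A * c * (c - 1) * φ (c - 2) 0 y - v * A * (c - 1) * φ (c - 2) (γ - 1) y
        - v * A ^ 2 * (c - 1) * φ (2 * c - 2) (γ - 2) y)
      {y | 0 < y ∧ A * y ^ c < T} := by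
  have h₀ : EqOn (iteratedDeriv 0 fun y => r * (A * y ^ c) + v * (T - A * y ^ c) ^ γ)
      (fun y => r * A * φ c 0 y + v * φ 0 γ y) {y | 0 < y ∧ A * y ^ c < T} := fun y _ => by
    simp [powMulSubRpow, mul_assoc]
  have h₁ := h₀.iteratedDeriv_succ_of_hasDerivAt isOpen_setOf_pos_and_mul_rpow_lt
    (g' := fun y => r * A * c * φ (c - 1) 0 y - v * A * φ (c - 1) (γ - 1) y)
    fun y ⟨hy, hyT⟩ => by
      refine (((hasDerivAt_powMulSubRpow c 0 hy hyT).const_mul (r * A)).add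
        ((hasDerivAt_powMulSubRpow 0 γ hy hyT).const_mul v)).congr_deriv ?_
      linear_combination (norm := ring_nf) (-v * A * φ (c - 1) (γ - 1) y) * hcγ
  exact h₁.iteratedDeriv_succ_of_hasDerivAt isOpen_setOf_pos_and_mul_rpow_lt
    fun y ⟨hy, hyT⟩ => by
      refine (((hasDerivAt_powMulSubRpow (c - 1) 0 hy hyT).const_mul (r * A * c)).sub
        ((hasDerivAt_powMulSubRpow (c - 1) (γ - 1) hy hyT).const_mul (v * A))).congr_deriv ?_
      linear_combination (norm := ring_nf) (v * A ^ 2 * φ (2 * c - 2) (γ - 2) y) * hcγ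

theorem eqOn_iteratedDeriv_three (hcγ : c * γ = 1) :
    EqOn (iteratedDeriv 3 fun y => r * (A * y ^ c) + v * (T - A * y ^ c) ^ γ)
      (fun y => r * A * c * (c - 1) * (c - 2) * φ (c - 3) 0 y
        - v * A * (c - 1) * (c - 2) * φ (c - 3) (γ - 1) y
        - 3 * v * A ^ 2 * (c - 1) ^ 2 * φ (2 * c - 3) (γ - 2) y
        - v * A ^ 3 * (c - 1) * (2 * c - 1) * φ (3 * c - 3) (γ - 3) y)
      {y | 0 < y ∧ A * y ^ c < T} :=
  (eqOn_iteratedDeriv_two hcγ).iteratedDeriv_succ_of_hasDerivAt isOpen_setOf_pos_and_mul_rpow_lt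
    fun y ⟨hy, hyT⟩ => by
      refine ((((hasDerivAt_powMulSubRpow (c - 2) 0 hy hyT).const_mul (r * A * c * (c - 1))).sub
        ((hasDerivAt_powMulSubRpow (c - 2) (γ - 1) hy hyT).const_mul (v * A * (c - 1)))).sub
        ((hasDerivAt_powMulSubRpow (2 * c - 2) (γ - 2) hy hyT).const_mul
          (v * A ^ 2 * (c - 1)))).congr_deriv ?_
      linear_combination (norm := ring_nf) (v * A ^ 2 * (c - 1) * φ (2 * c - 3) (γ - 2) y
        + v * A ^ 3 * (c - 1) * φ (3 * c - 3) (γ - 3) y) * hcγ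

theorem sub_two_mul_iteratedDeriv_two_sub_mul_iteratedDeriv_three {x : ℝ}
    (hcγ : c * γ = 1) (hx : 0 < x) (hxT : A * x ^ c < T) :
    (c - 2) * iteratedDeriv 2 (fun y => r * (A * y ^ c) + v * (T - A * y ^ c) ^ γ) x -
      x * iteratedDeriv 3 (fun y => r * (A * y ^ c) + v * (T - A * y ^ c) ^ γ) x =
      v * (c - 1) * (2 * c - 1) * T * A ^ 2 * x ^ (2 * c - 2) * (T - A * x ^ c) ^ (γ - 3) := by
  have e₁ (q : ℝ) : x * φ (c - 3) q x = φ (c - 2) q x := by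
    rw [mul_powMulSubRpow _ _ hx, show c - 3 + 1 = c - 2 by ring]
  have e₂ : x * φ (2 * c - 3) (γ - 2) x = φ (2 * c - 2) (γ - 2) x := by
    rw [mul_powMulSubRpow _ _ hx, show 2 * c - 3 + 1 = 2 * c - 2 by ring]
  have e₃ : x * φ (3 * c - 3) (γ - 3) x = x ^ c * φ (2 * c - 2) (γ - 3) x := by
    rw [mul_powMulSubRpow _ _ hx, rpow_mul_powMulSubRpow _ _ hx,
      show 3 * c - 3 + 1 = 2 * c - 2 + c by ring]
  have e₄ : φ (2 * c - 2) (γ - 2) x = (T - A * x ^ c) * φ (2 * c - 2) (γ - 3) x := by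
    rw [sub_mul_powMulSubRpow _ _ hxT, show γ - 3 + 1 = γ - 2 by ring]
  have e₅ : φ (2 * c - 2) (γ - 3) x = x ^ (2 * c - 2) * (T - A * x ^ c) ^ (γ - 3) := rfl
  rw [eqOn_iteratedDeriv_two hcγ ⟨hx, hxT⟩, eqOn_iteratedDeriv_three hcγ ⟨hx, hxT⟩]
  linear_combination (-r * A * c * (c - 1) * (c - 2)) * e₁ 0
    + v * A * (c - 1) * (c - 2) * e₁ (γ - 1) + 3 * v * A ^ 2 * (c - 1) ^ 2 * e₂
    + v * A ^ 3 * (c - 1) * (2 * c - 1) * e₃ + v * A ^ 2 * (c - 1) * (2 * c - 1) * e₄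
    + v * (c - 1) * (2 * c - 1) * T * A ^ 2 * e₅

end

theorem stmt_8_general (c γ T v r : ℝ) (hc : 1 < c) (hγ : γ = 1 / c)
    (m : ℕ) (l : ℝ) (hl : 0 < l) (hdom : ((m : ℝ) * l) ^ c < T) :
    (c - 2) * iteratedDeriv 2
        (fun x : ℝ => r * ((m : ℝ) * x) ^ c + v * (T - ((m : ℝ) * x) ^ c) ^ γ) l -
      l * iteratedDeriv 3
        (fun x : ℝ => r * ((m : ℝ) * x) ^ c + v * (T - ((m : ℝ) * x) ^ c) ^ γ) l =
      v * (c - 1) * (2 * c - 1) * T * (m : ℝ) ^ (2 * c) * l ^ (2 * c - 2) *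
        (T - ((m : ℝ) * l) ^ c) ^ (γ - 3) := by
  have hmul {y : ℝ} (hy : 0 ≤ y) : ((m : ℝ) * y) ^ c = (m : ℝ) ^ c * y ^ c :=
    Real.mul_rpow m.cast_nonneg hy
  have hf :
      (fun x : ℝ => r * ((m : ℝ) * x) ^ c + v * (T - ((m : ℝ) * x) ^ c) ^ γ) =ᶠ[𝓝 l]
      fun x => r * ((m : ℝ) ^ c * x ^ c) + v * (T - (m : ℝ) ^ c * x ^ c) ^ γ := by
    filter_upwards [Ioi_mem_nhds hl] with x hx
    rw [hmul (le_of_lt hx)]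
  have hcγ : c * γ = 1 := by
    rw [hγ, mul_one_div_cancel (by positivity)]
  have hsq : (m : ℝ) ^ (2 * c) = ((m : ℝ) ^ c) ^ 2 := by
    rw [mul_comm, Real.rpow_mul m.cast_nonneg, Real.rpow_two]
  rw [hmul hl.le] at hdom ⊢
  rw [hf.iteratedDeriv_eq, hf.iteratedDeriv_eq, hsq]
  exact sub_two_mul_iteratedDeriv_two_sub_mul_iteratedDeriv_three hcγ hl hdom

/-- with `f(m, l) = r (ml)^c + v (T - (ml)^c)^γ`, `γ = 1/c`, one has
`(c - 2) f_{ll}'' - l f_{lll}''' = v (c-1)(2c-1) T m^{2c} l^{2c-2} (T - (ml)^c)^{γ-3}`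
for all `l > 0` with `(ml)^c < T`. -/
theorem stmt_8 (c γ T v r : ℝ) (hc : 1 < c) (hγ : γ = 1 / c) (hT : 0 < T)
    (m : ℕ) (hm : 0 < m) (l : ℝ) (hl : 0 < l) (hdom : ((m : ℝ) * l) ^ c < T) :
    (c - 2) * iteratedDeriv 2
        (fun x : ℝ => r * ((m : ℝ) * x) ^ c + v * (T - ((m : ℝ) * x) ^ c) ^ γ) l -
      l * iteratedDeriv 3
        (fun x : ℝ => r * ((m : ℝ) * x) ^ c + v * (T - ((m : ℝ) * x) ^ c) ^ γ) l =
      v * (c - 1) * (2 * c - 1) * T * (m : ℝ) ^ (2 * c) * l ^ (2 * c - 2) *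
        (T - ((m : ℝ) * l) ^ c) ^ (γ - 3) :=
  stmt_8_general c γ T v r hc hγ m l hl hdom
end

section
/- For any complex numbers ξ(m) defined for integers m in (a, b] with 1 ≤ b - a, and any positive integer Q, one has |Σ_{a < m ≤ b} ξ(m)|² ≤ ((b - a + Q)/Q) Σ_{|q| < Q} (1 - |q|/Q) Σ_{m : a < m ≤ b, a < m + q ≤ b} ξ(m + q) · conj(ξ(m)). -/
open Finset ComplexConjugate

/-!
Extend `ξ` by zero outside `(a, b]` to `f`, and average the sum `S` of `f` over its `Q` translates:
`Q S = ∑_{n ∈ J} ∑_{r < Q} f (n + r)`, where `J` is the window of `⌊b⌋ - ⌊a⌋ + Q - 1 ≤ b - a + Q`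
integers `n` for which the block `n + [0, Q)` meets `(a, b]`. Cauchy–Schwarz over `J` gives
`Q² |S|² ≤ |J| ∑_{n ∈ J} |∑_{r < Q} f (n + r)|²`, and expanding the squares, each pair `(r, s)`
contributes the autocorrelation of `f` at `q = r - s`, which occurs for exactly `Q - |q|` pairs.
-/

lemma card_filter_sub_eq_sub_natAbs (Q : ℕ) (q : ℤ) :
    #{p ∈ range Q ×ˢ range Q | (p.1 : ℤ) - p.2 = q} = Q - q.natAbs := by
  have hfiber : {p ∈ range Q ×ˢ range Q | (p.1 : ℤ) - p.2 = q}
      = (range (Q - q.natAbs)).image fun t => (t + q.toNat, t + (-q).toNat) := by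
    ext ⟨r, s⟩
    simp only [mem_filter, mem_product, mem_range, mem_image, Prod.mk.injEq]
    constructor
    · rintro ⟨⟨hr, hs⟩, rfl⟩
      exact ⟨s - (-((r : ℤ) - s)).toNat, by omega, by omega, by omega⟩
    · rintro ⟨t, ht, rfl, rfl⟩
      omega
  rw [hfiber, card_image_of_injective _ fun t u h => by simpa using congrArg Prod.fst h,
    card_range]

lemma sum_range_prod_sub {M : Type*} [AddCommMonoid M] (Q : ℕ) (F : ℤ → M) :
    ∑ p ∈ range Q ×ˢ range Q, F (p.1 - p.2)
      = ∑ q ∈ Ioo (-(Q : ℤ)) Q, (Q - q.natAbs) • F q := by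
  have hmaps : ∀ p ∈ range Q ×ˢ range Q, (p.1 : ℤ) - p.2 ∈ Ioo (-(Q : ℤ)) Q := by
    intro p hp
    simp only [mem_product, mem_range] at hp
    simp only [mem_Ioo]
    omega
  rw [← sum_fiberwise_of_maps_to hmaps]
  refine sum_congr rfl fun q _ => ?_
  rw [sum_congr rfl fun p hp => by rw [(mem_filter.1 hp).2], sum_const,
    card_filter_sub_eq_sub_natAbs]

lemma sum_Ioc_add_eq_of_eq_zero {M : Type*} [AddCommMonoid M] {g : ℤ → M} {s : Finset ℤ}
    {c d r : ℤ} (hs : s ⊆ Ioc (c + r) (d + r)) (hg : ∀ m ∉ s, g m = 0) :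
    ∑ n ∈ Ioc c d, g (n + r) = ∑ m ∈ s, g m := by
  rw [sum_subset hs fun m _ hm => hg m hm, ← map_add_right_Ioc, sum_map]
  rfl

lemma norm_sum_sq_le_card_mul {ι E : Type*} [SeminormedAddCommGroup E] (s : Finset ι)
    (z : ι → E) : ‖∑ i ∈ s, z i‖ ^ 2 ≤ #s * ∑ i ∈ s, ‖z i‖ ^ 2 :=
  (pow_le_pow_left₀ (norm_nonneg _) (norm_sum_le _ _) 2).trans sq_sum_le_card_mul_sum_sq

lemma Complex.sq_norm_sum {ι : Type*} (s : Finset ι) (w : ι → ℂ) :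
    ‖∑ i ∈ s, w i‖ ^ 2 = ∑ i ∈ s, ∑ j ∈ s, (w i * conj (w j)).re := by
  simp_rw [← Complex.re_sum, ← mul_sum, ← sum_mul, ← map_sum, Complex.mul_conj']
  norm_cast

section Window

variable {f : ℤ → ℂ} {A B : ℤ}

lemma Ioc_subset_Ioc_sub_add (Q : ℕ) {r : ℕ} (hr : r < Q) :
    Ioc A B ⊆ Ioc (A + 1 - Q + r) (B + r) :=
  Ioc_subset_Ioc (by omega) (by omega)

lemma natCast_mul_sum_eq_sum_window (hf : ∀ m ∉ Ioc A B, f m = 0) (Q : ℕ) :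
    (Q : ℂ) * ∑ m ∈ Ioc A B, f m = ∑ n ∈ Ioc (A + 1 - Q) B, ∑ r ∈ range Q, f (n + r) := by
  rw [sum_comm, sum_congr rfl fun r hr =>
    sum_Ioc_add_eq_of_eq_zero (Ioc_subset_Ioc_sub_add Q (mem_range.1 hr)) hf,
    sum_const, card_range, nsmul_eq_mul]

lemma sum_sq_norm_window_eq (hf : ∀ m ∉ Ioc A B, f m = 0) (Q : ℕ) :
    ∑ n ∈ Ioc (A + 1 - Q) B, ‖∑ r ∈ range Q, f (n + r)‖ ^ 2
      = ∑ q ∈ Ioo (-(Q : ℤ)) Q, ((Q : ℝ) - |(q : ℝ)|) *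
          (∑ m ∈ Ioc A B, f (m + q) * conj (f m)).re := by
  have hpair : ∀ p ∈ range Q ×ˢ range Q,
      ∑ n ∈ Ioc (A + 1 - Q) B, (f (n + p.1) * conj (f (n + p.2))).re
        = (∑ m ∈ Ioc A B, f (m + (p.1 - p.2)) * conj (f m)).re := by
    intro p hp
    rw [Complex.re_sum, ← sum_Ioc_add_eq_of_eq_zero
      (Ioc_subset_Ioc_sub_add Q (mem_range.1 (mem_product.1 hp).2))
      (g := fun m => (f (m + (p.1 - p.2)) * conj (f m)).re) fun m hm => by simp [hf m hm]]
    simp only [add_add_sub_cancel]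
  simp_rw [Complex.sq_norm_sum]
  rw [sum_comm, sum_congr rfl fun _ _ => sum_comm, ← sum_product', sum_congr rfl hpair,
    sum_range_prod_sub Q fun q => (∑ m ∈ Ioc A B, f (m + q) * conj (f m)).re]
  refine sum_congr rfl fun q hq => ?_
  have hq : q.natAbs ≤ Q := by simp only [mem_Ioo] at hq; omega
  rw [nsmul_eq_mul, Nat.cast_sub hq, Nat.cast_natAbs, Int.cast_abs]

lemma sq_mul_sq_norm_sum_le (hf : ∀ m ∉ Ioc A B, f m = 0) (Q : ℕ) :
    (Q : ℝ) ^ 2 * ‖∑ m ∈ Ioc A B, f m‖ ^ 2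
      ≤ #(Ioc (A + 1 - Q) B) * ∑ q ∈ Ioo (-(Q : ℤ)) Q, ((Q : ℝ) - |(q : ℝ)|) *
          (∑ m ∈ Ioc A B, f (m + q) * conj (f m)).re := by
  have hCS := norm_sum_sq_le_card_mul (Ioc (A + 1 - Q) B) fun n => ∑ r ∈ range Q, f (n + r)
  rwa [← natCast_mul_sum_eq_sum_window hf, sum_sq_norm_window_eq hf, norm_mul, mul_pow,
    Complex.norm_natCast] at hCS

lemma sum_autocorrelation_nonneg (hf : ∀ m ∉ Ioc A B, f m = 0) (Q : ℕ) :
    0 ≤ ∑ q ∈ Ioo (-(Q : ℤ)) Q, ((Q : ℝ) - |(q : ℝ)|) *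
      (∑ m ∈ Ioc A B, f (m + q) * conj (f m)).re :=
  sum_sq_norm_window_eq hf Q ▸ sum_nonneg fun _ _ => by positivity

end Window

lemma sum_indicator_mul_conj_indicator (s : Finset ℤ) (ξ : ℤ → ℂ) (q : ℤ) :
    ∑ m ∈ s, (s : Set ℤ).indicator ξ (m + q) * conj ((s : Set ℤ).indicator ξ m)
      = ∑ m ∈ s.filter (fun m => m + q ∈ s), ξ (m + q) * conj (ξ m) := by
  rw [sum_filter]
  refine sum_congr rfl fun m hm => ?_
  by_cases hmq : m + q ∈ s <;> simp [hm, hmq]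

lemma card_Ioc_floor_floor_le {a b : ℝ} (h : a ≤ b) : (#(Ioc ⌊a⌋ ⌊b⌋) : ℝ) ≤ b - a + 1 := by
  rw [← Int.cast_natCast, Int.card_Ioc_of_le _ _ (Int.floor_mono h)]
  push_cast
  linarith [Int.floor_le b, Int.lt_floor_add_one a]

/-- Weyl–van der Corput inequality: for `ξ : ℤ → ℂ`, reals
`a ≤ b - 1` and a positive integer `Q`,
`|∑_{a < m ≤ b} ξ(m)|² ≤ ((b-a+Q)/Q) ∑_{|q|<Q} (1 - |q|/Q) ∑_{m, m+q ∈ (a,b]} ξ(m+q) conj ξ(m)`. -/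
theorem stmt_16 (a b : ℝ) (hab : 1 ≤ b - a) (Q : ℕ) (hQ : 0 < Q) (ξ : ℤ → ℂ) :
    ‖∑ m ∈ Finset.Ioc ⌊a⌋ ⌊b⌋, ξ m‖ ^ 2 ≤
      ((b - a + Q) / Q) *
        ∑ q ∈ Finset.Ioo (-(Q : ℤ)) (Q : ℤ), (1 - |(q : ℝ)| / Q) *
          (∑ m ∈ (Finset.Ioc ⌊a⌋ ⌊b⌋).filter (fun m => m + q ∈ Finset.Ioc ⌊a⌋ ⌊b⌋),
            (ξ (m + q) * starRingEnd ℂ (ξ m))).re := by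
  set I := Ioc ⌊a⌋ ⌊b⌋ with hI
  have hf : ∀ m ∉ I, (I : Set ℤ).indicator ξ m = 0 :=
    fun m hm => Set.indicator_of_notMem (mem_coe.not.2 hm) ξ
  have hsum : ∑ m ∈ I, (I : Set ℤ).indicator ξ m = ∑ m ∈ I, ξ m :=
    sum_congr rfl fun m hm => Set.indicator_of_mem (mem_coe.2 hm) ξ
  have hcard : (#(Ioc (⌊a⌋ + 1 - Q) ⌊b⌋) : ℝ) ≤ b - a + Q := by
    have h := card_Ioc_floor_floor_le (a := a + ((1 - Q : ℤ) : ℝ)) (b := b) (by push_cast; linarith)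
    rw [Int.floor_add_intCast, ← add_sub_assoc] at h
    push_cast at h
    linarith
  have key := sq_mul_sq_norm_sum_le hf Q
  have hnonneg := sum_autocorrelation_nonneg hf Q
  rw [← hI] at key hnonneg
  simp only [hsum, sum_indicator_mul_conj_indicator] at key hnonneg
  set W := ∑ q ∈ Ioo (-(Q : ℤ)) Q, ((Q : ℝ) - |(q : ℝ)|) *
    (∑ m ∈ I.filter (fun m => m + q ∈ I), ξ (m + q) * conj (ξ m)).re
  have hQ' : (0 : ℝ) < Q := Nat.cast_pos.2 hQ
  have hweights : ∑ q ∈ Ioo (-(Q : ℤ)) Q, (1 - |(q : ℝ)| / Q) *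
      (∑ m ∈ I.filter (fun m => m + q ∈ I), ξ (m + q) * conj (ξ m)).re = W / Q := by
    rw [sum_div]
    exact sum_congr rfl fun q _ => by field_simp
  rw [hweights, div_mul_div_comm, le_div_iff₀ (by positivity)]
  nlinarith [mul_le_mul_of_nonneg_right hcard hnonneg]
end
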